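/- For every ideal I of R_a there exist polynomials f₀, f₁, …, f_{a−1} ∈ (ZMod p^a)[X], each monic and dividing X^n − 1, satisfying the divisibility chain f_{a−1} | f_{a−2} | ⋯ | f₁ | f₀, such that I is the ideal of R_a generated by the images of f₀, p·f₁, p²·f₂, …, p^{a−1}·f_{a−1}. -/

import Mathlib

/-!
Let `J` be the preimage of `I` in `A[X]`, `A = ZMod (p ^ a)`, and let `Tᵢ ⊆ 𝔽_p[X]` be the
reduction mod `p` of `(J : pⁱ) = {q | pⁱ q ∈ J}`. The `Tᵢ` increase with `i` and contain `Xⁿ - 1`,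
so `Tᵢ = (gᵢ)` with monic `gᵢ ∣ Xⁿ - 1` and `gⱼ ∣ gᵢ` for `i ≤ j`. As `p ∤ n`, `Xⁿ - 1` is
separable mod `p`, so complementary factors are coprime: Hensel lifting (`p` is nilpotent) gives
monic `Fᵢ ∣ Xⁿ - 1` reducing to `gᵢ`, and divisibility among such factors can be read off mod `p`.
Two downward inductions on `i`, starting from `pᵃ = 0`, show that `Fᵢ ∈ (J : pⁱ)` and that
`pⁱ q` lies in the span of the `pʲ Fⱼ` whenever `q ∈ (J : pⁱ)`; at `i = 0` this is `J`.
-/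

open Polynomial

/-- The quotient ring `(ZMod p^a)[X]/(X^n - 1)`. -/
abbrev Rquot (p a n : ℕ) :=
  Polynomial (ZMod (p ^ a)) ⧸ Ideal.span {(X : Polynomial (ZMod (p ^ a))) ^ n - 1}

/-- The natural quotient map `(ZMod p^a)[X] → (ZMod p^a)[X]/(X^n - 1)`. -/
noncomputable abbrev rmk (p a n : ℕ) : Polynomial (ZMod (p ^ a)) →+* Rquot p a n :=
  Ideal.Quotient.mk _

theorem IsCoprime.of_map {R S : Type*} [CommRing R] [CommRing S] {f : R →+* S}
    (hf : Function.Surjective f) (hker : RingHom.ker f ≤ nilradical R) {x y : R}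
    (h : IsCoprime (f x) (f y)) : IsCoprime x y := by
  obtain ⟨u', v', huv⟩ := h
  obtain ⟨u, rfl⟩ := hf u'
  obtain ⟨v, rfl⟩ := hf v'
  have hnil : IsNilpotent (u * x + v * y - 1) :=
    hker (by simp [RingHom.mem_ker, huv])
  obtain ⟨w, hw⟩ := hnil.isUnit_add_one.exists_left_inv
  exact ⟨w * u, w * v, by linear_combination hw⟩

theorem Nat.decreasing_induction_of_ge {P : ℕ → Prop} {a : ℕ} (top : ∀ i, a ≤ i → P i)
    (succ : ∀ i < a, P (i + 1) → P i) (i : ℕ) : P i := by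
  obtain hi | hi := le_or_gt a i
  · exact top i hi
  · exact Nat.decreasingInduction' (fun k hk _ => succ k hk) hi.le (top a le_rfl)

theorem ZMod.ker_castHom {m n : ℕ} (h : m ∣ n) :
    RingHom.ker (ZMod.castHom h (ZMod m)) = Ideal.span {(m : ZMod n)} := by
  have hcomp : (ZMod.castHom h (ZMod m)).comp (Int.castRingHom (ZMod n)) = Int.castRingHom _ :=
    RingHom.ext_int _ _
  rw [← Ideal.map_comap_of_surjective (Int.castRingHom (ZMod n)) ZMod.intCast_surjective
      (RingHom.ker _),
    RingHom.comap_ker, hcomp, ZMod.ker_intCastRingHom, Ideal.map_span, Set.image_singleton]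
  simp

namespace Ideal

variable {R : Type*} [CommRing R]

def powColon (J : Ideal R) (x : R) (i : ℕ) : Ideal R := J.colon (Ideal.span {x ^ i})

variable {J : Ideal R} {x : R}

@[simp]
theorem mem_powColon {i : ℕ} {q : R} : q ∈ J.powColon x i ↔ x ^ i * q ∈ J := by
  rw [powColon, mem_colon_span_singleton, mul_comm]

theorem powColon_zero : J.powColon x 0 = J := by
  ext q; simp

theorem powColon_mono : Monotone (J.powColon x) :=
  monotone_nat_of_le_succ fun i q hq => by
    rw [mem_powColon, pow_succ', mul_assoc]
    exact J.mul_mem_left x (mem_powColon.mp hq)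

theorem powColon_eq_top {i : ℕ} (h : x ^ i = 0) : J.powColon x i = ⊤ :=
  eq_top_iff.mpr fun q _ => by simp [h]

theorem le_powColon (i : ℕ) : J ≤ J.powColon x i := by
  simpa only [powColon_zero] using powColon_mono (J := J) (x := x) (Nat.zero_le i)

end Ideal

namespace Polynomial

theorem exists_monic_factorization_mod_sq {R : Type*} [CommRing R] [Nontrivial R]
    {m W H E : R[X]} {x : R} (hW : W.Monic) (hWH : IsCoprime W H) (hm : m = W * H + C x * E) :
    ∃ S H' E', (W + C x * S).Monic ∧ m = (W + C x * S) * H' + C x ^ 2 * E' := by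
  obtain ⟨u, v, huv⟩ := hWH
  have hS := modByMonic_add_div (E * v) W
  refine ⟨E * v %ₘ W, H + C x * (E * u + (E * v /ₘ W) * H),
    -((E * v %ₘ W) * (E * u + (E * v /ₘ W) * H)), hW.add_of_left ?_, ?_⟩
  · rw [← smul_eq_C_mul]
    exact (degree_smul_le _ _).trans_lt (degree_modByMonic_lt _ hW)
  · -- `E = (E u + Q H) W + S H` with `S = E v %ₘ W`, `Q = E v /ₘ W`: the correction
    -- cancels the error term to first order in `x`.
    linear_combination hm - C x * E * huv - C x * H * hS

section Reduction

variable {A B : Type*} [CommRing A] [CommRing B] {π : A →+* B} {ϖ : A}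

theorem C_dvd_of_map_eq_zero (hker : RingHom.ker π = Ideal.span {ϖ}) {q : A[X]}
    (hq : q.map π = 0) : C ϖ ∣ q := by
  have : q ∈ RingHom.ker (mapRingHom π) := hq
  rwa [ker_mapRingHom, hker, Ideal.map_span, Set.image_singleton,
    Ideal.mem_span_singleton] at this

theorem isCoprime_of_isCoprime_map (hπ : Function.Surjective π)
    (hker : RingHom.ker π = Ideal.span {ϖ}) (hϖ : IsNilpotent ϖ) {F H : A[X]}
    (h : IsCoprime (F.map π) (H.map π)) : IsCoprime F H := by
  refine IsCoprime.of_map (f := mapRingHom π) (map_surjective π hπ) ?_ h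
  rw [ker_mapRingHom, hker, Ideal.map_span, Set.image_singleton, Ideal.span_le,
    Set.singleton_subset_iff]
  exact hϖ.map C

theorem dvd_of_map_dvd_map (hπ : Function.Surjective π)
    (hker : RingHom.ker π = Ideal.span {ϖ}) (hϖ : IsNilpotent ϖ) {m F G H : A[X]}
    (hsep : (m.map π).Separable) (hGH : G * H = m) (hF : F ∣ m)
    (hFG : F.map π ∣ G.map π) : F ∣ G := by
  rw [← hGH, Polynomial.map_mul] at hsep
  have hFH := isCoprime_of_isCoprime_map hπ hker hϖ
    (hsep.isCoprime.of_isCoprime_of_dvd_left hFG)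
  exact hFH.dvd_of_dvd_mul_right (hGH ▸ hF)

theorem exists_monic_dvd_map_eq [Nontrivial B] (hπ : Function.Surjective π)
    (hker : RingHom.ker π = Ideal.span {ϖ}) (hϖ : IsNilpotent ϖ) {m : A[X]} {g h : B[X]}
    (hsep : (m.map π).Separable) (hg : g.Monic) (hgh : g * h = m.map π) :
    ∃ F, F.Monic ∧ F ∣ m ∧ F.map π = g := by
  have := π.domain_nontrivial
  have hπϖ : π ϖ = 0 := by simp [← RingHom.mem_ker, hker]
  have approx : ∀ k, ∃ W H E, W.Monic ∧ W.map π = g ∧ m = W * H + C (ϖ ^ (k + 1)) * E := by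
    intro k
    induction k with
    | zero =>
      obtain ⟨W, hWg, -, hW⟩ := lifts_and_degree_eq_and_monic (map_surjective π hπ g) hg
      obtain ⟨H, rfl⟩ := map_surjective π hπ h
      obtain ⟨E, hE⟩ := C_dvd_of_map_eq_zero hker (q := m - W * H) (by simp [hWg, hgh])
      exact ⟨W, H, E, hW, hWg, by rw [zero_add, pow_one, ← hE]; ring⟩
    | succ k ih =>
      obtain ⟨W, H, E, hW, hWg, hm⟩ := ih
      have hWH : IsCoprime W H := by
        refine isCoprime_of_isCoprime_map hπ hker hϖ (Separable.isCoprime ?_)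
        simpa [hm, hπϖ] using hsep
      obtain ⟨S, H', E', hS, hm'⟩ := exists_monic_factorization_mod_sq hW hWH hm
      refine ⟨W + C (ϖ ^ (k + 1)) * S, H', C (ϖ ^ k) * E', hS, by simp [hWg, hπϖ], ?_⟩
      rw [hm']
      simp only [C_pow]
      ring
  obtain ⟨N, hN⟩ := hϖ
  obtain ⟨W, H, E, hW, hWg, hm⟩ := approx N
  exact ⟨W, hW, ⟨H, by simpa [pow_succ, hN] using hm⟩, hWg⟩

theorem mem_powColon_of_map_eq (hker : RingHom.ker π = Ideal.span {ϖ}) {J : Ideal A[X]}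
    {m F H u : A[X]} {i : ℕ} (hmJ : m ∈ J) (hFH : F * H = m) (hcop : IsCoprime F H)
    (hF : F ∈ J.powColon (C ϖ) (i + 1)) (hu : u ∈ J.powColon (C ϖ) i)
    (huF : u.map π = F.map π) : F ∈ J.powColon (C ϖ) i := by
  obtain ⟨r, hr⟩ := C_dvd_of_map_eq_zero hker (q := u - F) (by simp [huF])
  have hrH : r * H ∈ J.powColon (C ϖ) (i + 1) := by
    have : C ϖ ^ (i + 1) * (r * H) = C ϖ ^ i * u * H - C ϖ ^ i * m := by
      rw [← hFH]; linear_combination -(C ϖ ^ i * H) * hr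
    rw [Ideal.mem_powColon, this]
    exact J.sub_mem (J.mul_mem_right H (Ideal.mem_powColon.mp hu)) (J.mul_mem_left _ hmJ)
  have hrJ : r ∈ J.powColon (C ϖ) (i + 1) := by
    obtain ⟨α, β, hαβ⟩ := hcop
    rw [show r = r * α * F + β * (r * H) by linear_combination -r * hαβ]
    exact Ideal.add_mem _ (Ideal.mul_mem_left _ _ hF) (Ideal.mul_mem_left _ _ hrH)
  have : C ϖ ^ i * F = C ϖ ^ i * u - C ϖ ^ (i + 1) * r := by
    linear_combination -(C ϖ ^ i) * hr
  rw [Ideal.mem_powColon, this]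
  exact J.sub_mem (Ideal.mem_powColon.mp hu) (Ideal.mem_powColon.mp hrJ)

theorem C_pow_mul_mem_span_of_mem_powColon (hπ : Function.Surjective π)
    (hker : RingHom.ker π = Ideal.span {ϖ}) {a : ℕ} (hϖ : ϖ ^ a = 0) {J : Ideal A[X]}
    {F : ℕ → A[X]} (hF : ∀ i, F i ∈ J.powColon (C ϖ) i)
    (hgen : ∀ i, ∀ q ∈ J.powColon (C ϖ) i, (F i).map π ∣ q.map π) (i : ℕ) :
    ∀ q ∈ J.powColon (C ϖ) i,
      C ϖ ^ i * q ∈ Ideal.span (Set.range fun j : Fin a => C ϖ ^ (j : ℕ) * F j) := by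
  induction i using Nat.decreasing_induction_of_ge (a := a) with
  | top i hi =>
    intro q _
    rw [← C_pow, pow_eq_zero_of_le hi hϖ, C_0, zero_mul]
    exact Ideal.zero_mem _
  | succ i hi ih =>
    intro q hq
    obtain ⟨c', hc'⟩ := hgen i q hq
    obtain ⟨c, rfl⟩ := map_surjective π hπ c'
    obtain ⟨v, hv⟩ := C_dvd_of_map_eq_zero hker (q := q - F i * c) (by simp [hc'])
    have hsplit : C ϖ ^ i * q = (C ϖ ^ i * F i) * c + C ϖ ^ (i + 1) * v := by
      linear_combination C ϖ ^ i * hv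
    have hvJ : v ∈ J.powColon (C ϖ) (i + 1) := by
      rw [Ideal.mem_powColon, eq_sub_of_add_eq' hsplit.symm]
      exact J.sub_mem (Ideal.mem_powColon.mp hq)
        (J.mul_mem_right c (Ideal.mem_powColon.mp (hF i)))
    rw [hsplit]
    exact Ideal.add_mem _ (Ideal.mul_mem_right _ _ (Ideal.subset_span ⟨⟨i, hi⟩, rfl⟩)) (ih v hvJ)

theorem mem_powColon_of_chain (hπ : Function.Surjective π)
    (hker : RingHom.ker π = Ideal.span {ϖ}) {a : ℕ} (hϖ : ϖ ^ a = 0) {m : A[X]}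
    (hsep : (m.map π).Separable) {J : Ideal A[X]} (hmJ : m ∈ J) {F : ℕ → A[X]}
    (hFm : ∀ i, F i ∣ m) (hchain : ∀ i, F (i + 1) ∣ F i)
    (hlift : ∀ i, ∃ u ∈ J.powColon (C ϖ) i, u.map π = (F i).map π) (i : ℕ) :
    F i ∈ J.powColon (C ϖ) i := by
  induction i using Nat.decreasing_induction_of_ge (a := a) with
  | top i hi =>
    rw [Ideal.powColon_eq_top (by rw [← C_pow, pow_eq_zero_of_le hi hϖ, C_0])]
    trivial
  | succ i _ ih =>
    obtain ⟨H, hH⟩ := hFm i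
    obtain ⟨u, hu, huF⟩ := hlift i
    refine mem_powColon_of_map_eq hker hmJ hH.symm ?_ (Ideal.mem_of_dvd _ (hchain i) ih) hu huF
    refine isCoprime_of_isCoprime_map hπ hker ⟨a, hϖ⟩ (Separable.isCoprime ?_)
    rwa [← Polynomial.map_mul, ← hH]

end Reduction

theorem exists_monic_chain_span_eq {A K : Type*} [CommRing A] [Field K] {π : A →+* K} {ϖ : A}
    (hπ : Function.Surjective π) (hker : RingHom.ker π = Ideal.span {ϖ}) {a : ℕ} (hϖ : ϖ ^ a = 0) {m : A[X]}
    (hsep : (m.map π).Separable) (J : Ideal A[X]) (hmJ : m ∈ J) :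
    ∃ F : ℕ → A[X], (∀ i, (F i).Monic) ∧ (∀ i, F i ∣ m) ∧ (∀ i j, i ≤ j → F j ∣ F i) ∧
      J = Ideal.span (Set.range fun i : Fin a => C ϖ ^ (i : ℕ) * F i) := by
  set T : ℕ → Ideal K[X] := fun i => (J.powColon (C ϖ) i).map (mapRingHom π)
  have hmT (i : ℕ) : m.map π ∈ T i := Ideal.mem_map_of_mem _ (J.le_powColon i hmJ)
  choose g hg hgT using fun i =>
    exists_monic_span (T i) ((Submodule.ne_bot_iff _).mpr ⟨_, hmT i, hsep.ne_zero⟩)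
  have hgT_mem (i : ℕ) : g i ∈ T i := hgT i ▸ Ideal.mem_span_singleton_self (g i)
  have hgdvd {i : ℕ} {q : K[X]} (hq : q ∈ T i) : g i ∣ q := by
    rwa [hgT, Ideal.mem_span_singleton] at hq
  choose F hF hFm hFg using fun i => (hgdvd (hmT i)).elim fun h hh =>
    exists_monic_dvd_map_eq hπ hker ⟨a, hϖ⟩ hsep (hg i) hh.symm
  have hchain (i j : ℕ) (hij : i ≤ j) : F j ∣ F i := by
    obtain ⟨H, hH⟩ := hFm i
    refine dvd_of_map_dvd_map hπ hker ⟨a, hϖ⟩ hsep hH.symm (hFm j) ?_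
    rw [hFg, hFg]
    exact hgdvd (Ideal.map_mono (J.powColon_mono hij) (hgT_mem i))
  have hlift (i : ℕ) : ∃ u ∈ J.powColon (C ϖ) i, u.map π = (F i).map π := by
    rw [hFg]
    exact (Ideal.mem_map_iff_of_surjective (mapRingHom π) (map_surjective π hπ)).mp (hgT_mem i)
  have hFJ := mem_powColon_of_chain hπ hker hϖ hsep hmJ hFm (fun i => hchain i (i + 1) i.le_succ)
    hlift
  refine ⟨F, hF, hFm, hchain, le_antisymm (fun q hq => ?_) ?_⟩
  · simpa using C_pow_mul_mem_span_of_mem_powColon hπ hker hϖ hFJ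
      (fun i q hq => hFg i ▸ hgdvd (Ideal.mem_map_of_mem _ hq)) 0 q (by simpa using hq)
  · rw [Ideal.span_le]
    rintro _ ⟨i, rfl⟩
    exact Ideal.mem_powColon.mp (hFJ i)

end Polynomial

theorem stmt9_general (p : ℕ) [Fact p.Prime] (a n : ℕ) (ha : 0 < a) (hpn : ¬ p ∣ n)
    (I : Ideal (Rquot p a n)) :
    ∃ f : Fin a → Polynomial (ZMod (p ^ a)),
      (∀ i, (f i).Monic) ∧
      (∀ i, f i ∣ (X ^ n - 1)) ∧
      (∀ i j : Fin a, i ≤ j → f j ∣ f i) ∧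
      I = Ideal.span (Set.range fun i : Fin a =>
        rmk p a n (C ((p : ZMod (p ^ a)) ^ (i : ℕ)) * f i)) := by
  have hp : p ∣ p ^ a := dvd_pow_self p ha.ne'
  have hsep : ((X ^ n - 1 : (ZMod (p ^ a))[X]).map (ZMod.castHom hp (ZMod p))).Separable := by
    have hn : (n : ZMod p) ≠ 0 := by rwa [Ne, ZMod.natCast_eq_zero_iff]
    simpa using separable_X_pow_sub_C (1 : ZMod p) hn one_ne_zero
  have hmJ : X ^ n - 1 ∈ I.comap (rmk p a n) := by
    simp [Ideal.Quotient.eq_zero_iff_mem.mpr (Ideal.mem_span_singleton_self _)]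
  obtain ⟨F, hF, hFm, hchain, hspan⟩ := exists_monic_chain_span_eq (ZMod.castHom_surjective hp)
    (ZMod.ker_castHom hp) (by rw [← Nat.cast_pow, ZMod.natCast_self]) hsep _ hmJ
  refine ⟨fun i => F i, fun i => hF i, fun i => hFm i, fun i j hij => hchain i j hij, ?_⟩
  rw [← Ideal.map_comap_of_surjective _ Ideal.Quotient.mk_surjective I, hspan, Ideal.map_span,
    ← Set.range_comp]
  simp [Function.comp_def, C_pow]

theorem stmt9 (p : ℕ) [Fact p.Prime] (a n : ℕ) (ha : 0 < a) (hn : 0 < n) (hpn : ¬ p ∣ n)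
    (I : Ideal (Rquot p a n)) :
    ∃ f : Fin a → Polynomial (ZMod (p ^ a)),
      (∀ i, (f i).Monic) ∧
      (∀ i, f i ∣ (X ^ n - 1)) ∧
      (∀ i j : Fin a, i ≤ j → f j ∣ f i) ∧
      I = Ideal.span (Set.range fun i : Fin a =>
        rmk p a n (C ((p : ZMod (p ^ a)) ^ (i : ℕ)) * f i)) :=
  stmt9_general p a n ha hpn I
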